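/- Let u_l > u_r, ρ_l, ρ_r > 0, and for ε ∈ (0, η) let (u*_ε, ρ*_ε), s₁(ε), s₂(ε) be as in the two-shock Riemann solution: u_r < u*_ε < u_l, ρ*_ε > max(ρ_l, ρ_r), (u*_ε − u_l)²·(ρ*_ε + ρ_l)/2 = ε·(ρ*_ε − ρ_l)·(p(ρ*_ε) − p(ρ_l)), (u*_ε − u_r)²·(ρ*_ε + ρ_r)/2 = ε·(ρ*_ε − ρ_r)·(p(ρ*_ε) − p(ρ_r)), s₁(ε) = (u*_ε + u_l)/2 + ε·(p(ρ*_ε) − p(ρ_l))/(u*_ε − u_l), s₂(ε) = (u*_ε + u_r)/2 + ε·(p(ρ*_ε) − p(ρ_r))/(u*_ε − u_r). Then ε·e^{ρ*_ε}·(s₂(ε) − s₁(ε)) → 0 as ε → 0⁺. -/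

import Mathlib

open Real Filter Topology

/-- The pressure-like function `p(ρ) = ∫₀^ρ ξ·e^ξ dξ`. -/
noncomputable def p (ρ : ℝ) : ℝ := ∫ ξ in (0:ℝ)..ρ, ξ * Real.exp ξ

open Set

/-!
Solving the shock relation for the shock speed gives `s = u* + (u* − u₀)·ρ₀/(ρ* − ρ₀)`, so both
speeds differ from `u*` by `O(1/ρ*)`. Each shock relation also gives `(u* − u₀)² ≤ 2ε·p(ρ*)`, and since
`|u_l − u_r| ≤ |u* − u_l| + |u* − u_r|` this keeps `ε·p(ρ*)` away from `0`, forcing `ρ* → ∞`.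
Conversely, once `ρ* ≥ 3ρ_l` the left relation bounds `ε·p(ρ*) ≈ ε·ρ*·e^{ρ*}`, so `ε·e^{ρ*} = O(1/ρ*)`.
Both factors of `ε·e^{ρ*}·(s₂ − s₁)` therefore tend to `0`.
-/

lemma p_eq (ρ : ℝ) : p ρ = (ρ - 1) * exp ρ + 1 := by
  have hderiv : ∀ x ∈ uIcc (0:ℝ) ρ, HasDerivAt (fun x => (x - 1) * exp x) (x * exp x) x :=
    fun x _ => (((hasDerivAt_id x).sub_const 1).mul (hasDerivAt_exp x)).congr_deriv (by simp; ring)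
  rw [p, intervalIntegral.integral_eq_sub_of_hasDerivAt hderiv
    ((continuous_id.mul continuous_exp).intervalIntegrable 0 ρ)]
  norm_num

lemma p_monotoneOn : MonotoneOn p (Ici 0) := by
  intro a ha b _ hab
  have hint : ∀ x y : ℝ, IntervalIntegrable (fun ξ => ξ * exp ξ) MeasureTheory.volume x y :=
    fun x y => (continuous_id.mul continuous_exp).intervalIntegrable x y
  rw [p, p, ← intervalIntegral.integral_add_adjacent_intervals (hint 0 a) (hint a b)]
  exact le_add_of_nonneg_right <| intervalIntegral.integral_nonneg hab
    fun x hx => mul_nonneg (le_trans ha hx.1) (exp_pos x).le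

lemma p_nonneg {ρ : ℝ} (hρ : 0 ≤ ρ) : 0 ≤ p ρ := by
  simpa [p] using p_monotoneOn self_mem_Ici hρ hρ

lemma mul_exp_le_two_mul_p {ρ : ℝ} (hρ : 2 ≤ ρ) : ρ * exp ρ ≤ 2 * p ρ := by
  rw [p_eq]
  nlinarith [mul_nonneg (sub_nonneg.mpr hρ) (exp_pos ρ).le]

section Shock

variable {u u₀ ρ ρ₀ ε P P₀ : ℝ}

lemma shock_speed_eq (hu : u ≠ u₀) (hρ : ρ ≠ ρ₀)
    (h : (u - u₀) ^ 2 * (ρ + ρ₀) / 2 = ε * (ρ - ρ₀) * (P - P₀)) :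
    (u + u₀) / 2 + ε * (P - P₀) / (u - u₀) = u + (u - u₀) * ρ₀ / (ρ - ρ₀) := by
  have hu' : u - u₀ ≠ 0 := sub_ne_zero.mpr hu
  have hρ' : ρ - ρ₀ ≠ 0 := sub_ne_zero.mpr hρ
  field_simp
  linear_combination -2 * h

lemma sq_sub_le_of_shock (hρ₀ : 0 < ρ₀) (hρ : ρ₀ ≤ ρ) (hε : 0 ≤ ε) (hP₀ : 0 ≤ P₀) (hP : P₀ ≤ P)
    (h : (u - u₀) ^ 2 * (ρ + ρ₀) / 2 = ε * (ρ - ρ₀) * (P - P₀)) :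
    (u - u₀) ^ 2 ≤ 2 * ε * P := by
  refine le_of_mul_le_mul_right ?_ (by linarith : 0 < ρ + ρ₀)
  nlinarith [mul_nonneg hε (mul_nonneg hρ₀.le (hP₀.trans hP)),
    mul_nonneg hε (mul_nonneg hP₀ (sub_nonneg.mpr hρ))]

lemma mul_sub_le_sq_of_shock (hρ₀ : 0 < ρ₀) (hρ : 3 * ρ₀ ≤ ρ)
    (h : (u - u₀) ^ 2 * (ρ + ρ₀) / 2 = ε * (ρ - ρ₀) * (P - P₀)) :
    ε * (P - P₀) ≤ (u - u₀) ^ 2 := by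
  refine le_of_mul_le_mul_left ?_ (by linarith : 0 < ρ - ρ₀)
  nlinarith [mul_nonneg (sq_nonneg (u - u₀)) (by linarith : (0:ℝ) ≤ ρ - 3 * ρ₀)]

lemma tendsto_shock_speed_sub {α : Type*} {l : Filter α} {u ρ ε P : α → ℝ} {u₀ ρ₀ P₀ D : ℝ}
    (hρ : Tendsto ρ l atTop) (hu : ∀ᶠ x in l, u x ≠ u₀ ∧ |u x - u₀| ≤ D)
    (h : ∀ᶠ x in l, (u x - u₀) ^ 2 * (ρ x + ρ₀) / 2 = ε x * (ρ x - ρ₀) * (P x - P₀)) :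
    Tendsto (fun x => (u x + u₀) / 2 + ε x * (P x - P₀) / (u x - u₀) - u x) l (𝓝 0) := by
  have hlim : Tendsto (fun x => D * |ρ₀| / (ρ x - ρ₀)) l (𝓝 0) :=
    tendsto_const_nhds.div_atTop (tendsto_atTop_add_const_right l (-ρ₀) hρ)
  refine squeeze_zero_norm' ?_ hlim
  filter_upwards [hu, h, hρ.eventually_gt_atTop ρ₀] with x ⟨hne, hD⟩ hx hρx
  rw [shock_speed_eq hne hρx.ne' hx, add_sub_cancel_left, norm_eq_abs, abs_div, abs_mul,
    abs_of_pos (sub_pos.mpr hρx)]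
  gcongr

end Shock

lemma sq_sub_le_eight_mul_p_of_two_shocks {ul ur ρl ρr u ρ ε : ℝ} (hρl : 0 < ρl) (hρr : 0 < ρr)
    (hl : ρl ≤ ρ) (hr : ρr ≤ ρ) (hε : 0 ≤ ε)
    (h1 : (u - ul) ^ 2 * (ρ + ρl) / 2 = ε * (ρ - ρl) * (p ρ - p ρl))
    (h2 : (u - ur) ^ 2 * (ρ + ρr) / 2 = ε * (ρ - ρr) * (p ρ - p ρr)) :
    (ul - ur) ^ 2 ≤ 8 * (ε * p ρ) := by
  have hl' := sq_sub_le_of_shock hρl hl hε (p_nonneg hρl.le)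
    (p_monotoneOn hρl.le (hρl.le.trans hl) hl) h1
  have hr' := sq_sub_le_of_shock hρr hr hε (p_nonneg hρr.le)
    (p_monotoneOn hρr.le (hρr.le.trans hr) hr) h2
  nlinarith [sq_nonneg (2 * u - ul - ur)]

lemma mul_exp_mul_le_of_shock {ul ur ρl u ρ ε η : ℝ} (hρl : 0 < ρl) (hρ : max 2 (3 * ρl) ≤ ρ)
    (hε : ε ∈ Ioo 0 η) (hur : ur < u) (hul : u < ul)
    (h : (u - ul) ^ 2 * (ρ + ρl) / 2 = ε * (ρ - ρl) * (p ρ - p ρl)) :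
    ε * exp ρ * ρ ≤ 2 * ((ul - ur) ^ 2 + η * p ρl) := by
  rw [max_le_iff] at hρ
  calc ε * exp ρ * ρ = ε * (ρ * exp ρ) := by ring
    _ ≤ ε * (2 * p ρ) := mul_le_mul_of_nonneg_left (mul_exp_le_two_mul_p hρ.1) hε.1.le
    _ = 2 * (ε * (p ρ - p ρl) + ε * p ρl) := by ring
    _ ≤ 2 * ((ul - ur) ^ 2 + η * p ρl) := by
      gcongr
      · exact (mul_sub_le_sq_of_shock hρl hρ.2 h).trans (sq_le_sq' (by linarith) (by linarith))
      · exact p_nonneg hρl.le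
      · exact hε.2.le

lemma tendsto_atTop_of_tendsto_comp_of_monotoneOn {α : Type*} {l : Filter α} {f : ℝ → ℝ}
    {g : α → ℝ} {a : ℝ} (hf : MonotoneOn f (Ici a)) (hg : ∀ᶠ x in l, a ≤ g x)
    (hfg : Tendsto (f ∘ g) l atTop) : Tendsto g l atTop := by
  rw [tendsto_atTop]
  intro M
  filter_upwards [hg, hfg.eventually_gt_atTop (f (max M a))] with x hx hfx
  by_contra! hlt
  exact hfx.not_ge (hf hx (le_max_right M a) (hlt.le.trans (le_max_left M a)))

lemma tendsto_atTop_of_le_mul_p {ρ : ℝ → ℝ} {c : ℝ} (hc : 0 < c)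
    (h : ∀ᶠ ε in 𝓝[>] (0:ℝ), 0 ≤ ρ ε ∧ c ≤ ε * p (ρ ε)) : Tendsto ρ (𝓝[>] 0) atTop := by
  refine tendsto_atTop_of_tendsto_comp_of_monotoneOn p_monotoneOn (h.mono fun ε hε => hε.1)
    (tendsto_atTop_mono' _ ?_ (tendsto_inv_nhdsGT_zero.const_mul_atTop hc))
  filter_upwards [h, self_mem_nhdsWithin] with ε hε hpos
  rw [← div_eq_mul_inv, Function.comp_apply, div_le_iff₀' hpos]
  exact hε.2

/-- `ε·e^{ρ*_ε}·(s₂(ε) − s₁(ε)) → 0` as `ε → 0⁺` for the two-shock Riemann solution. -/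
theorem stmt13 (ul ur ρl ρr η : ℝ) (hu : ur < ul) (hρl : 0 < ρl) (hρr : 0 < ρr)
    (hη : 0 < η) (us ρs s1 s2 : ℝ → ℝ)
    (hmem : ∀ ε ∈ Set.Ioo (0:ℝ) η, ur < us ε ∧ us ε < ul ∧ max ρl ρr < ρs ε)
    (heq1 : ∀ ε ∈ Set.Ioo (0:ℝ) η,
      (us ε - ul) ^ 2 * (ρs ε + ρl) / 2 = ε * (ρs ε - ρl) * (p (ρs ε) - p ρl))
    (heq2 : ∀ ε ∈ Set.Ioo (0:ℝ) η,
      (us ε - ur) ^ 2 * (ρs ε + ρr) / 2 = ε * (ρs ε - ρr) * (p (ρs ε) - p ρr))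
    (hs1 : ∀ ε, s1 ε = (us ε + ul) / 2 + ε * (p (ρs ε) - p ρl) / (us ε - ul))
    (hs2 : ∀ ε, s2 ε = (us ε + ur) / 2 + ε * (p (ρs ε) - p ρr) / (us ε - ur)) :
    Tendsto (fun ε => ε * Real.exp (ρs ε) * (s2 ε - s1 ε)) (𝓝[>] (0:ℝ)) (𝓝 0) := by
  have hε : ∀ᶠ ε in 𝓝[>] (0:ℝ), ε ∈ Ioo 0 η := Ioo_mem_nhdsGT hη
  have hρ : Tendsto ρs (𝓝[>] 0) atTop := by
    refine tendsto_atTop_of_le_mul_p (by positivity : 0 < (ul - ur) ^ 2 / 8) ?_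
    filter_upwards [hε] with ε hε
    have hmax := max_lt_iff.mp (hmem ε hε).2.2
    have := sq_sub_le_eight_mul_p_of_two_shocks hρl hρr hmax.1.le hmax.2.le hε.1.le
      (heq1 ε hε) (heq2 ε hε)
    exact ⟨hρl.le.trans hmax.1.le, by linarith⟩
  have hexp : Tendsto (fun ε => ε * exp (ρs ε)) (𝓝[>] 0) (𝓝 0) := by
    refine squeeze_zero' ?_ ?_
      (tendsto_const_nhds.div_atTop hρ (a := 2 * ((ul - ur) ^ 2 + η * p ρl)))
    · filter_upwards [hε] with ε hε using mul_nonneg hε.1.le (exp_pos _).le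
    filter_upwards [hε, hρ.eventually_ge_atTop (max 2 (3 * ρl))] with ε hε hbig
    rw [le_div_iff₀ (two_pos.trans_le ((le_max_left _ _).trans hbig))]
    exact mul_exp_mul_le_of_shock hρl hbig hε (hmem ε hε).1 (hmem ε hε).2.1 (heq1 ε hε)
  have hspeed : Tendsto (fun ε => s2 ε - s1 ε) (𝓝[>] 0) (𝓝 0) := by
    have hl := tendsto_shock_speed_sub (D := ul - ur) hρ
      (hε.mono fun ε hε => ⟨(hmem ε hε).2.1.ne,
        abs_sub_le_iff.mpr ⟨by linarith [hmem ε hε], by linarith [hmem ε hε]⟩⟩)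
      (hε.mono heq1)
    have hr := tendsto_shock_speed_sub (D := ul - ur) hρ
      (hε.mono fun ε hε => ⟨(hmem ε hε).1.ne',
        abs_sub_le_iff.mpr ⟨by linarith [hmem ε hε], by linarith [hmem ε hε]⟩⟩)
      (hε.mono heq2)
    simpa [hs1, hs2] using hr.sub hl
  simpa using hexp.mul hspeed
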